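/- Let k ≥ 2 and let p₁, …, p_k be a k-cap or a k-cup in ℝ². Then the set {p₁, …, p_k} admits a covering path consisting of ⌈k/2⌉ segments. -/

import Mathlib

noncomputable section

open scoped RealInnerProductSpace

/-- Points of the Euclidean plane. -/
abbrev Pt : Type := EuclideanSpace ℝ (Fin 2)

/-- The `i`-th closed segment of a polygonal path with vertices `v 0, …, v m`. -/
def pathSeg {m : ℕ} (v : Fin (m + 1) → Pt) (i : Fin m) : Set Pt :=
  segment ℝ (v i.castSucc) (v i.succ)

/-- `v 0, …, v m` is a covering path with `m` segments for `S`: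
every point of `S` lies on some segment of the path. -/
def IsCoveringPath (S : Set Pt) (m : ℕ) (v : Fin (m + 1) → Pt) : Prop :=
  ∀ p ∈ S, ∃ i : Fin m, p ∈ pathSeg v i

/-- The polygonal path with vertices `v 0, …, v m` is noncrossing (a simple arc):
consecutive segments meet exactly in their common vertex, and
non-consecutive segments are disjoint. -/
def IsNoncrossing (m : ℕ) (v : Fin (m + 1) → Pt) : Prop :=
  ∀ i j : Fin m, i < j →
    (((j : ℕ) = (i : ℕ) + 1) → pathSeg v i ∩ pathSeg v j = {v i.succ}) ∧
    (((i : ℕ) + 1 < (j : ℕ)) → pathSeg v i ∩ pathSeg v j = ∅)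

/-- `p 0, …, p (k-1)` is a `k`-cap: strictly increasing x-coordinates and
strictly decreasing slopes of consecutive segments. -/
def IsCap (k : ℕ) (p : ℕ → Pt) : Prop :=
  (∀ i j : ℕ, i < j → j < k → p i 0 < p j 0) ∧
  (∀ i : ℕ, i + 2 < k →
    (p (i + 2) 1 - p (i + 1) 1) / (p (i + 2) 0 - p (i + 1) 0) <
      (p (i + 1) 1 - p i 1) / (p (i + 1) 0 - p i 0))

/-- `p 0, …, p (k-1)` is a `k`-cup: strictly increasing x-coordinates and
strictly increasing slopes of consecutive segments. -/
def IsCup (k : ℕ) (p : ℕ → Pt) : Prop :=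
  (∀ i j : ℕ, i < j → j < k → p i 0 < p j 0) ∧
  (∀ i : ℕ, i + 2 < k →
    (p (i + 1) 1 - p i 1) / (p (i + 1) 0 - p i 0) <
      (p (i + 2) 1 - p (i + 1) 1) / (p (i + 2) 0 - p (i + 1) 0))

/-!
Pair the points as `p 0 p 1`, `p 2 p 3`, …. In a cap or a cup all edges turn the same way, so the
ray extending `p (2i) p (2i+1)` beyond `p (2i+1)` meets the ray extending `p (2i+3) p (2i+2)` beyond
`p (2i+2)` (Cramer's rule gives both parameters the sign of the turns). Starting at `p 0`, passing
through these meeting points and ending at `p (2m-1)` gives `m` segments, the `i`-th containing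
`p (2i)` and `p (2i+1)`. For odd `k` one more segment reaches the last point.
-/

def cross (a b : Pt) : ℝ := a 0 * b 1 - a 1 * b 0

lemma cross_eq_mul_mul_sub {a b : Pt} (ha : a 0 ≠ 0) (hb : b 0 ≠ 0) :
    cross a b = a 0 * b 0 * (b 1 / b 0 - a 1 / a 0) := by
  unfold cross
  field_simp

lemma wbtw_add_smul_sub {R E : Type*} [Field R] [LinearOrder R] [IsStrictOrderedRing R]
    [AddCommGroup E] [Module R E] (a b : E) {t : R} (ht : 0 ≤ t) :
    Wbtw R a b (b + t • (b - a)) := by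
  simpa [add_comm] using
    wbtw_smul_vadd_smul_vadd_of_nonpos_of_nonneg b (b - a) (neg_nonpos.2 zero_le_one) ht

lemma cross_smul_add_cross_smul (d₁ d₂ e : Pt) :
    cross e d₂ • d₁ + cross d₁ e • d₂ = cross d₁ d₂ • e := by
  ext i
  fin_cases i <;>
    simp only [cross, Fin.zero_eta, Fin.mk_one, PiLp.add_apply, PiLp.smul_apply, smul_eq_mul] <;>
    ring

lemma exists_wbtw_wbtw_of_cross {σ : ℝ} {a b c d : Pt}
    (habc : 0 ≤ σ * cross (b - a) (c - b)) (hbcd : 0 ≤ σ * cross (c - b) (d - c))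
    (habcd : 0 < σ * cross (b - a) (d - c)) :
    ∃ x, Wbtw ℝ a b x ∧ Wbtw ℝ x c d := by
  set D := σ * cross (b - a) (d - c)
  set t := σ * cross (c - b) (d - c) / D
  set u := σ * cross (b - a) (c - b) / D
  have hcorner : t • (b - a) + u • (d - c) = c - b :=
    calc t • (b - a) + u • (d - c)
        = D⁻¹ • σ • (cross (c - b) (d - c) • (b - a) + cross (b - a) (c - b) • (d - c)) :=
          by simp only [t, u]; module
      _ = D⁻¹ • D • (c - b) := by rw [cross_smul_add_cross_smul, smul_smul σ]
      _ = c - b := inv_smul_smul₀ habcd.ne' _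
  refine ⟨b + t • (b - a), wbtw_add_smul_sub a b (div_nonneg hbcd habcd.le), ?_⟩
  rw [show b + t • (b - a) = c + u • (c - d) by linear_combination (norm := module) hcorner]
  exact (wbtw_add_smul_sub d c (div_nonneg habc habcd.le)).symm

/-- All edges of `p 0, …, p (k-1)` turn the same way: `σ = 1` for a cup, `σ = -1` for a cap. -/
def IsConvexChain (k : ℕ) (p : ℕ → Pt) : Prop :=
  (∀ i, i + 1 < k → p i ≠ p (i + 1)) ∧
    ∃ σ : ℝ, ∀ i j, i < j → j + 1 < k →
      0 < σ * cross (p (i + 1) - p i) (p (j + 1) - p j)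

def edgeSlope (p : ℕ → Pt) (i : ℕ) : ℝ := (p (i + 1) 1 - p i 1) / (p (i + 1) 0 - p i 0)

lemma isConvexChain_of_edgeSlope {k : ℕ} {p : ℕ → Pt} (σ : ℝ)
    (hx : ∀ i, i + 1 < k → p i 0 < p (i + 1) 0)
    (hs : ∀ i, i + 2 < k → σ * edgeSlope p i < σ * edgeSlope p (i + 1)) :
    IsConvexChain k p := by
  refine ⟨fun i hi h => (hx i hi).ne (congrArg (· 0) h), σ, fun i j hij hj => ?_⟩
  have hmono : StrictMonoOn (fun i => σ * edgeSlope p i) (Set.Iic (k - 2)) :=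
    strictMonoOn_Iic_of_lt_succ fun i hi => by simpa using hs i (by omega)
  have hslope := hmono (Set.mem_Iic.2 (by omega)) (Set.mem_Iic.2 (by omega)) hij
  have hi0 := sub_pos.2 (hx i (by omega))
  have hj0 := sub_pos.2 (hx j hj)
  rw [cross_eq_mul_mul_sub (by simpa using hi0.ne') (by simpa using hj0.ne')]
  simp only [edgeSlope, PiLp.sub_apply] at hslope ⊢
  nlinarith [mul_pos hi0 hj0]

lemma IsCap.isConvexChain {k : ℕ} {p : ℕ → Pt} (h : IsCap k p) : IsConvexChain k p :=
  isConvexChain_of_edgeSlope (-1) (fun i hi => h.1 i (i + 1) (by omega) hi) fun i hi => by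
    have : edgeSlope p (i + 1) < edgeSlope p i := h.2 i hi
    linarith

lemma IsCup.isConvexChain {k : ℕ} {p : ℕ → Pt} (h : IsCup k p) : IsConvexChain k p :=
  isConvexChain_of_edgeSlope 1 (fun i hi => h.1 i (i + 1) (by omega) hi) fun i hi => by
    have : edgeSlope p i < edgeSlope p (i + 1) := h.2 i hi
    linarith

namespace IsConvexChain

variable {k : ℕ} {p : ℕ → Pt}

lemma mono (h : IsConvexChain k p) {j : ℕ} (hjk : j ≤ k) : IsConvexChain j p :=
  ⟨fun i hi => h.1 i (by omega),
    h.2.imp fun _ hσ i i' hii' hi' => hσ i i' hii' (by omega)⟩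

lemma exists_corner (h : IsConvexChain k p) {i : ℕ} (hi : i + 3 < k) :
    ∃ x, Wbtw ℝ (p i) (p (i + 1)) x ∧ Wbtw ℝ x (p (i + 2)) (p (i + 3)) := by
  obtain ⟨-, σ, hσ⟩ := h
  exact exists_wbtw_wbtw_of_cross (hσ i (i + 1) (by omega) (by omega)).le
    (hσ (i + 1) (i + 2) (by omega) (by omega)).le (hσ i (i + 2) (by omega) (by omega))

end IsConvexChain

/-- The `i`-th segment of this path carries the edge `p (2i) p (2i+1)`; the vertex `c i` is where
the extensions of the `i`-th and `(i+1)`-st of these edges meet. -/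
def cornerPath (p c : ℕ → Pt) (m : ℕ) : ℕ → Pt
  | 0 => p 0
  | i + 1 => if i + 1 = m then p (2 * i + 1) else c i

lemma wbtw_cornerPath_left {m : ℕ} {p c : ℕ → Pt}
    (hc : ∀ i, i + 1 < m → Wbtw ℝ (c i) (p (2 * i + 2)) (p (2 * i + 3)))
    {i : ℕ} (hi : i < m) :
    Wbtw ℝ (cornerPath p c m i) (p (2 * i)) (p (2 * i + 1)) := by
  cases i with
  | zero => exact wbtw_self_left _ _ _
  | succ i =>
    simp only [cornerPath, if_neg hi.ne]
    exact hc i hi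

lemma wbtw_cornerPath_right {m : ℕ} {p c : ℕ → Pt}
    (hc : ∀ i, i + 1 < m → Wbtw ℝ (p (2 * i)) (p (2 * i + 1)) (c i))
    {i : ℕ} (hi : i < m) :
    Wbtw ℝ (p (2 * i)) (p (2 * i + 1)) (cornerPath p c m (i + 1)) := by
  by_cases hlast : i + 1 = m
  · simp only [cornerPath, if_pos hlast]
    exact wbtw_self_right _ _ _
  · simp only [cornerPath, if_neg hlast]
    exact hc i (by omega)

lemma isCoveringPath_cornerPath {m : ℕ} {p c : ℕ → Pt}
    (hne : ∀ i < m, p (2 * i) ≠ p (2 * i + 1))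
    (hc : ∀ i, i + 1 < m → Wbtw ℝ (p (2 * i)) (p (2 * i + 1)) (c i) ∧
      Wbtw ℝ (c i) (p (2 * i + 2)) (p (2 * i + 3))) :
    IsCoveringPath {q | ∃ j < 2 * m, q = p j} m (fun i => cornerPath p c m i) := by
  rintro _ ⟨j, hj, rfl⟩
  obtain ⟨i, hji⟩ : ∃ i, j = 2 * i ∨ j = 2 * i + 1 := ⟨j / 2, by omega⟩
  have hi : i < m := by omega
  have hl := wbtw_cornerPath_left (fun i hi => (hc i hi).2) hi
  have hr := wbtw_cornerPath_right (fun i hi => (hc i hi).1) hi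
  refine ⟨⟨i, hi⟩, ?_⟩
  simp only [pathSeg, Fin.val_castSucc, Fin.val_succ, mem_segment_iff_wbtw]
  rcases hji with rfl | rfl
  · exact hl.trans_expand_left hr (hne i hi)
  · exact hl.trans_expand_right hr (hne i hi)

theorem IsConvexChain.exists_isCoveringPath_two_mul {m : ℕ} {p : ℕ → Pt}
    (h : IsConvexChain (2 * m) p) :
    ∃ v : Fin (m + 1) → Pt, IsCoveringPath {q | ∃ j < 2 * m, q = p j} m v := by
  have hcorner : ∀ i, ∃ x, i + 1 < m →
      Wbtw ℝ (p (2 * i)) (p (2 * i + 1)) x ∧ Wbtw ℝ x (p (2 * i + 2)) (p (2 * i + 3)) := by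
    intro i
    by_cases hi : i + 1 < m
    · obtain ⟨x, hx⟩ := h.exists_corner (i := 2 * i) (by omega)
      exact ⟨x, fun _ => hx⟩
    · exact ⟨0, fun hi' => absurd hi' hi⟩
  choose c hc using hcorner
  exact ⟨_, isCoveringPath_cornerPath (fun i hi => h.1 (2 * i) (by omega)) hc⟩

lemma IsCoveringPath.mono {S T : Set Pt} {m : ℕ} {v : Fin (m + 1) → Pt}
    (hv : IsCoveringPath T m v) (hST : S ⊆ T) : IsCoveringPath S m v :=
  fun q hq => hv q (hST hq)

lemma IsCoveringPath.snoc {S : Set Pt} {m : ℕ} {v : Fin (m + 1) → Pt}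
    (hv : IsCoveringPath S m v) (q : Pt) :
    IsCoveringPath (insert q S) (m + 1) (Fin.snoc v q) := by
  rintro r (rfl | hr)
  · exact ⟨Fin.last m, by
      simpa only [pathSeg, Fin.succ_last, Fin.snoc_last] using right_mem_segment ℝ _ _⟩
  · obtain ⟨i, hi⟩ := hv r hr
    exact ⟨i.castSucc, by simpa only [pathSeg, Fin.succ_castSucc, Fin.snoc_castSucc] using hi⟩

theorem stmt_2_general (k : ℕ) (p : ℕ → Pt)
    (hcc : IsCap k p ∨ IsCup k p) :
    ∃ v : Fin ((k + 1) / 2 + 1) → Pt,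
      IsCoveringPath {q : Pt | ∃ i < k, q = p i} ((k + 1) / 2) v := by
  have hchain : IsConvexChain k p := hcc.elim IsCap.isConvexChain IsCup.isConvexChain
  obtain ⟨m, rfl | rfl⟩ := Nat.even_or_odd' k
  · rw [show (2 * m + 1) / 2 = m by omega]
    exact hchain.exists_isCoveringPath_two_mul
  · obtain ⟨v, hv⟩ := (hchain.mono (Nat.le_succ _)).exists_isCoveringPath_two_mul
    rw [show (2 * m + 1 + 1) / 2 = m + 1 by omega]
    refine ⟨Fin.snoc v (p (2 * m)), (hv.snoc _).mono ?_⟩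
    rintro _ ⟨i, hi, rfl⟩
    obtain rfl | hi' : i = 2 * m ∨ i < 2 * m := by omega
    · exact Set.mem_insert _ _
    · exact Set.mem_insert_of_mem _ ⟨i, hi', rfl⟩

/-- A `k`-cap or `k`-cup admits a covering path with `⌈k/2⌉` segments. -/
theorem stmt_2 (k : ℕ) (hk : 2 ≤ k) (p : ℕ → Pt)
    (hcc : IsCap k p ∨ IsCup k p) :
    ∃ v : Fin ((k + 1) / 2 + 1) → Pt,
      IsCoveringPath {q : Pt | ∃ i < k, q = p i} ((k + 1) / 2) v :=
  stmt_2_general k p hcc
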